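/- arXiv:2310.10568 — 2 statements merged into one kernel-verified Lean document; each statement's English description precedes it below -/
import Mathlib

section
/- Let G be a group and let V and V' be nonzero finite-dimensional complex representations of G of dimensions 2g and 2g' respectively, each self-dual (isomorphic as a G-representation to its dual representation). Suppose that Hom_G(V, V') = 0 and that there exists an element z ∈ G acting as −identity on V and as −identity on V'. Then dim (V ⊗ V ⊗ V' ⊗ V')^G + 2g' · dim (V ⊗ V ⊗ V')^G − 2g · dim (V ⊗ V' ⊗ V')^G − 4gg' · dim (V ⊗ V')^G > 0; in fact this quantity equals dim (V ⊗ V ⊗ V' ⊗ V')^G, which is at least 1. -/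
/-!
The element `z` acts as `-1` on `V ⊗ V ⊗ V'` and on `V ⊗ V' ⊗ V'`, so these have no invariants.
A self-duality `V ≅ V^∨` identifies `(V ⊗ W)^G` with `(V^∨ ⊗ W)^G ≅ Hom(V, W)^G = Hom_G(V, W)`;
this vanishes for `W = V'` and contains the identity for `W = V`. So the alternating sum is
`dim (V ⊗ V ⊗ V' ⊗ V')^G`, and that space contains `t ⊗ t'` for nonzero invariants `t ∈ V ⊗ V`,
`t' ∈ V' ⊗ V'`.
-/

open TensorProduct Module

lemma TensorProduct.tmul_ne_zero {K M N : Type*} [Field K] [AddCommGroup M] [Module K M]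
    [AddCommGroup N] [Module K N] {m : M} {n : N} (hm : m ≠ 0) (hn : n ≠ 0) :
    m ⊗ₜ[K] n ≠ 0 := by
  obtain ⟨f, hf⟩ : ∃ f : Dual K M, f m ≠ 0 := by
    simpa using mt (forall_dual_apply_eq_zero_iff K m).1 hm
  obtain ⟨g, hg⟩ : ∃ g : Dual K N, g n ≠ 0 := by
    simpa using mt (forall_dual_apply_eq_zero_iff K n).1 hn
  intro h
  have := congrArg (fun t => TensorProduct.lid K K (TensorProduct.map f g t)) h
  simp only [map_tmul, lid_tmul, smul_eq_mul, map_zero] at this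
  exact mul_ne_zero hf hg this

namespace Representation

section Monoid

variable {k G V W U : Type*} [CommSemiring k] [Monoid G] [AddCommMonoid V] [Module k V]
  [AddCommMonoid W] [Module k W] [AddCommMonoid U] [Module k U]
  {ρ : Representation k G V} {σ : Representation k G W}

lemma tprod_apply_eq_smul {z : G} {a b : k} (h : ρ z = a • 1) (h' : σ z = b • 1) :
    ρ.tprod σ z = (a * b) • 1 := by
  rw [tprod_apply, h, h', map_smul_left, map_smul_right, smul_smul, mul_comm, TensorProduct.map_one]

noncomputable def Equiv.rTensor (φ : ρ.Equiv σ) (τ : Representation k G U) :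
    (ρ.tprod τ).Equiv (σ.tprod τ) :=
  .mk (TensorProduct.congr φ.toLinearEquiv (LinearEquiv.refl k U)) fun g => by
    ext v u
    simp [φ.toIntertwiningMap.isIntertwining]

end Monoid

section CommRing

variable {k G V W : Type*} [CommRing k] [Group G] [AddCommGroup V] [Module k V]
  [AddCommGroup W] [Module k W] {ρ : Representation k G V} {σ : Representation k G W}

lemma IntertwiningMap.invariants_le_comap (f : IntertwiningMap ρ σ) :
    ρ.invariants ≤ σ.invariants.comap f.toLinearMap := fun v hv g => by
  simp [← f.isIntertwining, hv g]

lemma Equiv.map_invariants (φ : ρ.Equiv σ) :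
    ρ.invariants.map (φ.toLinearEquiv : V →ₗ[k] W) = σ.invariants := by
  refine le_antisymm (Submodule.map_le_iff_le_comap.2 φ.toIntertwiningMap.invariants_le_comap) ?_
  rw [Submodule.map_equiv_eq_comap_symm]
  exact φ.symm.toIntertwiningMap.invariants_le_comap

lemma Equiv.finrank_invariants_eq (φ : ρ.Equiv σ) :
    finrank k ρ.invariants = finrank k σ.invariants := by
  rw [← φ.map_invariants, LinearEquiv.finrank_map_eq]

end CommRing

section Field

variable {k G V W : Type*} [Field k] [Group G] [AddCommGroup V] [Module k V]
  [AddCommGroup W] [Module k W] {ρ : Representation k G V} {σ : Representation k G W}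

lemma invariants_eq_bot_of_apply_eq_smul {z : G} {c : k} (h : ρ z = c • 1) (hc : c ≠ 1) :
    ρ.invariants = ⊥ := by
  refine (Submodule.eq_bot_iff _).2 fun v hv => ?_
  have hcv : c • v = v := by simpa [h] using hv z
  have : (c - 1) • v = 0 := by rw [sub_smul, one_smul, hcv, sub_self]
  exact (smul_eq_zero.1 this).resolve_left (sub_ne_zero.2 hc)

lemma finrank_invariants_tprod_eq_finrank_intertwiningMap [FiniteDimensional k V]
    [FiniteDimensional k W] (φ : ρ.Equiv ρ.dual) (τ : Representation k G W) :
    finrank k (ρ.tprod τ).invariants = finrank k (IntertwiningMap ρ τ) := by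
  rw [((φ.rTensor τ).trans (Equiv.dualTensorHom ρ τ)).finrank_invariants_eq]
  exact (invariantsEquivIntertwiningMap ρ τ).finrank_eq

lemma finrank_intertwiningMap_self_pos [FiniteDimensional k V] [Nontrivial V] :
    0 < finrank k (IntertwiningMap ρ ρ) := by
  refine finrank_pos_iff_exists_ne_zero.2 ⟨IntertwiningMap.id ρ, fun h => ?_⟩
  obtain ⟨v, hv⟩ := exists_ne (0 : V)
  exact hv congr($h v)

lemma finrank_invariants_tprod_pos [FiniteDimensional k V] [FiniteDimensional k W]
    (hρ : 0 < finrank k ρ.invariants) (hσ : 0 < finrank k σ.invariants) :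
    0 < finrank k (ρ.tprod σ).invariants := by
  obtain ⟨⟨v, hv⟩, hv0⟩ := finrank_pos_iff_exists_ne_zero.1 hρ
  obtain ⟨⟨w, hw⟩, hw0⟩ := finrank_pos_iff_exists_ne_zero.1 hσ
  have hvw : v ⊗ₜ w ∈ (ρ.tprod σ).invariants := fun g => by rw [tprod_apply, map_tmul, hv g, hw g]
  refine finrank_pos_iff_exists_ne_zero.2 ⟨⟨_, hvw⟩, fun h => ?_⟩
  exact TensorProduct.tmul_ne_zero (by simpa using hv0) (by simpa using hw0) congr($h.1)

end Field

end Representation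

open Representation

set_option synthInstance.maxHeartbeats 1000000 in
theorem trivial_multiplicity_pos_general
    {G : Type*} [Group G]
    {V V' : Type*} [AddCommGroup V] [Module ℂ V] [FiniteDimensional ℂ V]
    [AddCommGroup V'] [Module ℂ V'] [FiniteDimensional ℂ V']
    [Nontrivial V] [Nontrivial V']
    (g g' : ℕ)
    (ρ : Representation ℂ G V) (ρ' : Representation ℂ G V')
    (hsd : ∃ e : V ≃ₗ[ℂ] Module.Dual ℂ V, ∀ (σ : G) (v : V), e (ρ σ v) = ρ.dual σ (e v))
    (hsd' : ∃ e : V' ≃ₗ[ℂ] Module.Dual ℂ V', ∀ (σ : G) (v : V'), e (ρ' σ v) = ρ'.dual σ (e v))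
    (hhom : ∀ f : V →ₗ[ℂ] V', (∀ (σ : G) (v : V), f (ρ σ v) = ρ' σ (f v)) → f = 0)
    (z : G) (hz : ∀ v : V, ρ z v = -v) (hz' : ∀ v : V', ρ' z v = -v) :
    0 < (Module.finrank ℂ (((ρ.tprod ρ).tprod (ρ'.tprod ρ')).invariants) : ℤ)
          + 2 * g' * (Module.finrank ℂ ((ρ.tprod (ρ.tprod ρ')).invariants) : ℤ)
          - 2 * g * (Module.finrank ℂ ((ρ.tprod (ρ'.tprod ρ')).invariants) : ℤ)
          - 4 * g * g' * (Module.finrank ℂ ((ρ.tprod ρ').invariants) : ℤ) ∧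
      (Module.finrank ℂ (((ρ.tprod ρ).tprod (ρ'.tprod ρ')).invariants) : ℤ)
          + 2 * g' * (Module.finrank ℂ ((ρ.tprod (ρ.tprod ρ')).invariants) : ℤ)
          - 2 * g * (Module.finrank ℂ ((ρ.tprod (ρ'.tprod ρ')).invariants) : ℤ)
          - 4 * g * g' * (Module.finrank ℂ ((ρ.tprod ρ').invariants) : ℤ)
        = (Module.finrank ℂ (((ρ.tprod ρ).tprod (ρ'.tprod ρ')).invariants) : ℤ) ∧
      1 ≤ Module.finrank ℂ (((ρ.tprod ρ).tprod (ρ'.tprod ρ')).invariants) := by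
  obtain ⟨e, he⟩ := hsd
  obtain ⟨e', he'⟩ := hsd'
  let φ : ρ.Equiv ρ.dual := .mk e fun σ => LinearMap.ext (he σ)
  let φ' : ρ'.Equiv ρ'.dual := .mk e' fun σ => LinearMap.ext (he' σ)
  have hneg : ρ z = (-1 : ℂ) • 1 := LinearMap.ext fun v => by simp [hz]
  have hneg' : ρ' z = (-1 : ℂ) • 1 := LinearMap.ext fun v => by simp [hz']
  have hVV' : finrank ℂ (ρ.tprod ρ').invariants = 0 := by
    have : Subsingleton (IntertwiningMap ρ ρ') := ⟨fun f f' => IntertwiningMap.ext <|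
      (hhom _ f.isIntertwining).trans (hhom _ f'.isIntertwining).symm⟩
    rw [finrank_invariants_tprod_eq_finrank_intertwiningMap φ, finrank_zero_of_subsingleton]
  have hVVV' : (ρ.tprod (ρ.tprod ρ')).invariants = ⊥ := invariants_eq_bot_of_apply_eq_smul
    (tprod_apply_eq_smul hneg (tprod_apply_eq_smul hneg hneg')) (by norm_num)
  have hVV'V' : (ρ.tprod (ρ'.tprod ρ')).invariants = ⊥ := invariants_eq_bot_of_apply_eq_smul
    (tprod_apply_eq_smul hneg (tprod_apply_eq_smul hneg' hneg')) (by norm_num)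
  have hquad : 0 < finrank ℂ ((ρ.tprod ρ).tprod (ρ'.tprod ρ')).invariants :=
    finrank_invariants_tprod_pos
      (by rw [finrank_invariants_tprod_eq_finrank_intertwiningMap φ]
          exact finrank_intertwiningMap_self_pos)
      (by rw [finrank_invariants_tprod_eq_finrank_intertwiningMap φ']
          exact finrank_intertwiningMap_self_pos)
  rw [hVV', hVVV', hVV'V', finrank_bot, finrank_bot]
  exact ⟨by omega, by ring, hquad⟩

set_option synthInstance.maxHeartbeats 1000000 in
theorem trivial_multiplicity_pos
    {G : Type*} [Group G]
    {V V' : Type*} [AddCommGroup V] [Module ℂ V] [FiniteDimensional ℂ V]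
    [AddCommGroup V'] [Module ℂ V'] [FiniteDimensional ℂ V']
    [Nontrivial V] [Nontrivial V']
    (g g' : ℕ)
    (hdim : Module.finrank ℂ V = 2 * g) (hdim' : Module.finrank ℂ V' = 2 * g')
    (ρ : Representation ℂ G V) (ρ' : Representation ℂ G V')
    (hsd : ∃ e : V ≃ₗ[ℂ] Module.Dual ℂ V, ∀ (σ : G) (v : V), e (ρ σ v) = ρ.dual σ (e v))
    (hsd' : ∃ e : V' ≃ₗ[ℂ] Module.Dual ℂ V', ∀ (σ : G) (v : V'), e (ρ' σ v) = ρ'.dual σ (e v))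
    (hhom : ∀ f : V →ₗ[ℂ] V', (∀ (σ : G) (v : V), f (ρ σ v) = ρ' σ (f v)) → f = 0)
    (z : G) (hz : ∀ v : V, ρ z v = -v) (hz' : ∀ v : V', ρ' z v = -v) :
    0 < (Module.finrank ℂ (((ρ.tprod ρ).tprod (ρ'.tprod ρ')).invariants) : ℤ)
          + 2 * g' * (Module.finrank ℂ ((ρ.tprod (ρ.tprod ρ')).invariants) : ℤ)
          - 2 * g * (Module.finrank ℂ ((ρ.tprod (ρ'.tprod ρ')).invariants) : ℤ)
          - 4 * g * g' * (Module.finrank ℂ ((ρ.tprod ρ').invariants) : ℤ) ∧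
      (Module.finrank ℂ (((ρ.tprod ρ).tprod (ρ'.tprod ρ')).invariants) : ℤ)
          + 2 * g' * (Module.finrank ℂ ((ρ.tprod (ρ.tprod ρ')).invariants) : ℤ)
          - 2 * g * (Module.finrank ℂ ((ρ.tprod (ρ'.tprod ρ')).invariants) : ℤ)
          - 4 * g * g' * (Module.finrank ℂ ((ρ.tprod ρ').invariants) : ℤ)
        = (Module.finrank ℂ (((ρ.tprod ρ).tprod (ρ'.tprod ρ')).invariants) : ℤ) ∧
      1 ≤ Module.finrank ℂ (((ρ.tprod ρ).tprod (ρ'.tprod ρ')).invariants) :=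
  trivial_multiplicity_pos_general g g' ρ ρ' hsd hsd' hhom z hz hz'
end

section
/- Let a be a real number with 0 < a < 1 and let y be a real number with y ≥ 1. Then (1/(2π)) ∫_{t ∈ ℝ} y^{2 + it} / (2 + a + it)² dt = y^{−a} · log y, where y^{s} denotes exp(s · log y) for s ∈ ℂ. -/
/-!
The integral is the inverse Mellin transform of `s ↦ 1 / (s + a)²` on the line `Re s = 2`,
evaluated at `1 / y`. After the substitution `x = e^{-u}`, Mellin inversion is Fourier inversion
for the ramp `u ↦ u₊ e^{-cu}` with `c = 2 + a`, whose Fourier transform is `1 / (c + 2πiξ)²`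
because `∫₀^∞ u e^{-zu} du = 1 / z²` for `Re z > 0`. Inverting at `u = log y ≥ 0` gives
`y² · log y · y^{-(2 + a)} = y^{-a} log y`.
-/

open MeasureTheory Complex Filter Set Topology FourierTransform Real

lemma tendsto_ofReal_mul_cexp_neg_mul_atTop {z : ℂ} (hz : 0 < z.re) :
    Tendsto (fun x : ℝ => (x : ℂ) * cexp (-(z * x))) atTop (𝓝 0) := by
  rw [tendsto_zero_iff_norm_tendsto_zero]
  refine (tendsto_rpow_mul_exp_neg_mul_atTop_nhds_zero 1 z.re hz).congr' ?_
  filter_upwards [eventually_ge_atTop 0] with x hx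
  simp [norm_exp, abs_of_nonneg hx]

lemma tendsto_cexp_neg_mul_atTop {z : ℂ} (hz : 0 < z.re) :
    Tendsto (fun x : ℝ => cexp (-(z * x))) atTop (𝓝 0) := by
  rw [tendsto_zero_iff_norm_tendsto_zero]
  refine (Real.tendsto_exp_neg_atTop_nhds_zero.comp (tendsto_id.const_mul_atTop hz)).congr
    fun x => ?_
  simp [norm_exp]

lemma integrableOn_ofReal_mul_cexp_neg_mul_Ioi {z : ℂ} (hz : 0 < z.re) :
    IntegrableOn (fun x : ℝ => (x : ℂ) * cexp (-(z * x))) (Ioi 0) := by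
  have hbound : IntegrableOn (fun x : ℝ => x ^ (1 : ℝ) * Real.exp (-z.re * x ^ (1 : ℝ))) (Ioi 0) :=
    integrableOn_rpow_mul_exp_neg_mul_rpow (by norm_num) (by norm_num) hz
  refine hbound.mono' (by fun_prop) ?_
  filter_upwards [ae_restrict_mem measurableSet_Ioi] with x hx
  simp [norm_exp, abs_of_pos (mem_Ioi.mp hx)]

lemma integral_ofReal_mul_cexp_neg_mul_Ioi {z : ℂ} (hz : 0 < z.re) :
    ∫ x in Ioi (0 : ℝ), (x : ℂ) * cexp (-(z * x)) = (z ^ 2)⁻¹ := by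
  have hz0 : z ≠ 0 := by rintro rfl; simp at hz
  let F : ℝ → ℂ := fun x => -(x / z + (z ^ 2)⁻¹) * cexp (-(z * x))
  have hF : ∀ x ∈ Ici (0 : ℝ), HasDerivAt F ((x : ℂ) * cexp (-(z * x))) x := by
    intro x _
    have hx : HasDerivAt (fun x : ℝ => (x : ℂ)) 1 x := (hasDerivAt_id x).ofReal_comp
    refine ((((hx.div_const z).add_const (z ^ 2)⁻¹).fun_neg).fun_mul
      ((hx.const_mul z).fun_neg.cexp)).congr_deriv ?_
    field_simp
    ring
  have hlim : Tendsto F atTop (𝓝 0) := by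
    have := ((tendsto_ofReal_mul_cexp_neg_mul_atTop hz).div_const z).add
      ((tendsto_cexp_neg_mul_atTop hz).const_mul (z ^ 2)⁻¹)
    rw [zero_div, zero_add, mul_zero] at this
    refine Tendsto.congr (fun x => ?_) (by simpa using this.neg)
    simp only [F]
    ring
  rw [integral_Ioi_of_hasDerivAt_of_tendsto' hF (integrableOn_ofReal_mul_cexp_neg_mul_Ioi hz) hlim]
  simp [F]

lemma integrable_inv_sq_add_mul_I {c b : ℝ} (hc : c ≠ 0) (hb : b ≠ 0) :
    Integrable fun ξ : ℝ => (((c : ℂ) + b * ξ * I) ^ 2)⁻¹ := by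
  have hne : ∀ ξ : ℝ, (c : ℂ) + b * ξ * I ≠ 0 := fun ξ h => hc (by simpa using congrArg re h)
  have hnorm : ∀ ξ : ℝ, ‖(((c : ℂ) + b * ξ * I) ^ 2)⁻¹‖ = (c ^ 2)⁻¹ * (1 + (b / c * ξ) ^ 2)⁻¹ := by
    intro ξ
    rw [norm_inv, norm_pow, Complex.sq_norm, show (c : ℂ) + b * ξ * I = c + ((b * ξ : ℝ) : ℂ) * I by
      push_cast; ring, normSq_add_mul_I]
    field_simp
  refine (integrable_norm_iff (by fun_prop (disch := exact hne _))).mp ?_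
  simp_rw [hnorm]
  exact (integrable_inv_one_add_sq.comp_mul_left' (div_ne_zero hb hc)).const_mul _

noncomputable def rampExp (c : ℝ) (x : ℝ) : ℂ := ((max x 0 : ℝ) : ℂ) * cexp (-(c * x))

lemma continuous_rampExp (c : ℝ) : Continuous (rampExp c) := by
  unfold rampExp
  fun_prop

lemma rampExp_of_nonpos {c x : ℝ} (hx : x ≤ 0) : rampExp c x = 0 := by
  simp [rampExp, max_eq_right hx]

lemma rampExp_of_nonneg {c x : ℝ} (hx : 0 ≤ x) : rampExp c x = x * cexp (-(c * x)) := by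
  simp [rampExp, max_eq_left hx]

lemma integrable_rampExp {c : ℝ} (hc : 0 < c) : Integrable (rampExp c) := by
  rw [← integrableOn_univ, ← Iic_union_Ioi (a := 0), integrableOn_union]
  refine ⟨integrableOn_zero.congr_fun (fun x hx => (rampExp_of_nonpos hx).symm) measurableSet_Iic,
    ?_⟩
  exact (integrableOn_ofReal_mul_cexp_neg_mul_Ioi (z := c) (by simpa using hc)).congr_fun
    (fun x hx => (rampExp_of_nonneg hx.le).symm) measurableSet_Ioi

lemma fourier_rampExp {c : ℝ} (hc : 0 < c) (ξ : ℝ) :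
    𝓕 (rampExp c) ξ = (((c : ℂ) + 2 * π * ξ * I) ^ 2)⁻¹ := by
  rw [Real.fourier_real_eq_integral_exp_smul,
    ← setIntegral_eq_integral_of_forall_compl_eq_zero (s := Ioi 0)
      fun x hx => by rw [rampExp_of_nonpos (not_lt.mp hx), smul_zero],
    ← integral_ofReal_mul_cexp_neg_mul_Ioi (z := c + 2 * π * ξ * I) (by simpa using hc)]
  refine setIntegral_congr_fun measurableSet_Ioi fun x hx => ?_
  rw [rampExp_of_nonneg hx.le, smul_eq_mul, mul_left_comm, ← Complex.exp_add]
  push_cast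
  ring_nf

lemma fourierInv_inv_sq_add_mul_I {c L : ℝ} (hc : 0 < c) (hL : 0 ≤ L) :
    𝓕⁻ (fun ξ : ℝ => (((c : ℂ) + 2 * π * ξ * I) ^ 2)⁻¹ : ℝ → ℂ) L = L * cexp (-(c * L)) := by
  have hF : 𝓕 (rampExp c) = fun ξ : ℝ => (((c : ℂ) + 2 * π * ξ * I) ^ 2)⁻¹ :=
    funext (fourier_rampExp hc)
  have hFint : Integrable (𝓕 (rampExp c)) := by
    rw [hF]
    simpa using integrable_inv_sq_add_mul_I hc.ne' (b := 2 * π) (by positivity)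
  rw [← hF, (continuous_rampExp c).fourierInv_fourier_eq (integrable_rampExp hc) hFint,
    rampExp_of_nonneg hL]

lemma mellinInv_inv_add_sq {σ a x : ℝ} (hσa : 0 < σ + a) (hx0 : 0 < x) (hx1 : x ≤ 1) :
    mellinInv σ (fun s => ((s + a) ^ 2)⁻¹) x = ((x ^ a * -Real.log x : ℝ) : ℂ) := by
  have hL : 0 ≤ -Real.log x := neg_nonneg.mpr (Real.log_nonpos hx0.le hx1)
  have hshift : (fun ξ : ℝ => (((σ : ℂ) + 2 * π * ξ * I + a) ^ 2)⁻¹) =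
      fun ξ : ℝ => ((((σ + a : ℝ) : ℂ) + 2 * π * ξ * I) ^ 2)⁻¹ := by
    funext ξ
    push_cast
    ring_nf
  rw [mellinInv_eq_fourierInv _ _ hx0, hshift, fourierInv_inv_sq_add_mul_I hσa hL, smul_eq_mul,
    ← ofReal_neg, ← ofReal_cpow hx0.le]
  have hpow : Real.exp (-((σ + a) * -Real.log x)) = x ^ (σ + a) := by
    rw [Real.rpow_def_of_pos hx0]
    ring_nf
  norm_cast
  rw [hpow, mul_left_comm, ← Real.rpow_add hx0]
  ring_nf

lemma ofReal_inv_cpow_neg {y : ℝ} (hy : 0 < y) (s : ℂ) :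
    ((y⁻¹ : ℝ) : ℂ) ^ (-s) = cexp (s * Real.log y) := by
  rw [cpow_def_of_ne_zero (by simpa using hy.ne'), ← ofReal_log (inv_nonneg.mpr hy.le),
    Real.log_inv]
  push_cast
  ring_nf

theorem bach_kernel_ge_one_general (a y : ℝ) (ha0 : 0 < a) (hy : 1 ≤ y) :
    (1 / (2 * Real.pi) : ℂ) *
        ∫ t : ℝ, Complex.exp ((2 + t * Complex.I) * (Real.log y : ℂ)) /
          ((2 : ℂ) + (a : ℂ) + t * Complex.I) ^ 2
      = ((y ^ (-a) * Real.log y : ℝ) : ℂ) := by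
  have hy0 : 0 < y := by linarith
  have hmellin := mellinInv_inv_add_sq (σ := 2) (a := a) (by linarith) (inv_pos.mpr hy0)
    (inv_le_one_of_one_le₀ hy)
  rw [Real.inv_rpow hy0.le, ← Real.rpow_neg hy0.le, Real.log_inv, neg_neg] at hmellin
  rw [← hmellin, mellinInv, real_smul]
  congr 1
  · norm_num
  · congr 1 with t
    rw [ofReal_inv_cpow_neg hy0, smul_eq_mul, div_eq_mul_inv]
    push_cast
    ring_nf

theorem bach_kernel_ge_one (a y : ℝ) (ha0 : 0 < a) (ha1 : a < 1) (hy : 1 ≤ y) :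
    (1 / (2 * Real.pi) : ℂ) *
        ∫ t : ℝ, Complex.exp ((2 + t * Complex.I) * (Real.log y : ℂ)) /
          ((2 : ℂ) + (a : ℂ) + t * Complex.I) ^ 2
      = ((y ^ (-a) * Real.log y : ℝ) : ℂ) :=
  bach_kernel_ge_one_general a y ha0 hy
end
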